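/- Under the hypotheses of the previous statement, the group homomorphism from the free product (k_0,+) * (k_0,+) to Aut(A), sending the word m_z * n_z * ⋯ * m_1 * n_1 to h^{m_z} g^{n_z} ⋯ h^{m_1} g^{n_1}, is injective. Consequently, if k_0 ≠ ℤ/2, then Aut(A) contains a free subgroup of rank two. -/

import Mathlib

/-!
Ping-pong. Let `R` be the subalgebra generated by the `x i`, `i ≥ 2`; it is fixed by every
`g n` and `h m`. Put `W = a₁ b₁` and look at the elements `r + P(W) x₀ + Q(W) a₁ x₁` with
`r ∈ R`, `P, Q ∈ k₀[X]`, `Q ≠ 0`, sorted by whether `deg Q < deg P`. For `n ≠ 0`, `g n` replaces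
`Q` by `Q + n P` and so sends the first kind into the second; for `m ≠ 0`, `h m` replaces `P` by
`P + m X Q` and sends the second kind into the first. Freeness of `R + R x₀ + R x₁` and the
transcendence of `W` show that `x₀` is of neither kind while `g n x₀` is of the second, so a
nonempty reduced word whose rightmost letter is some `g n` moves `x₀`. Exchanging the roles of
`(x₀, a, g)` and `(x₁, b, h)` (with `W = b₁ a₁`, again transcendental), a reduced word whose
rightmost letter is some `h m` moves `x₁`.

For the free subgroup, pick nontrivial `c ≠ c'` in `(k₀, +)`: then `h^c g^c` and `h^{c'} g^{c'}`
play ping-pong on reduced words of the free product, according to their first letter.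
-/

universe u

open Function Monoid Polynomial
open scoped Pointwise

namespace Monoid

def coprodEquivCoprodI (M : Type*) [Monoid M] : Coprod M M ≃* CoprodI fun _ : Bool => M :=
  MonoidHom.toMulEquiv
    (Coprod.lift (CoprodI.of (M := fun _ : Bool => M) (i := true))
      (CoprodI.of (M := fun _ : Bool => M) (i := false)))
    (CoprodI.lift fun b => cond b Coprod.inl Coprod.inr)
    (by ext <;> simp) (by ext b m; cases b <;> simp)

theorem Coprod.lift_injective_iff {M P : Type*} [Monoid M] [Monoid P] (f₁ f₂ : M →* P) :
    Injective (Coprod.lift f₁ f₂) ↔ Injective (CoprodI.lift fun b => cond b f₁ f₂) := by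
  have : Coprod.lift f₁ f₂ =
      (CoprodI.lift fun b => cond b f₁ f₂).comp (coprodEquivCoprodI M).toMonoidHom := by
    ext <;> simp [coprodEquivCoprodI]
  rw [this, MonoidHom.coe_comp, MulEquiv.coe_toMonoidHom, EquivLike.injective_comp]

namespace CoprodI

variable {ι : Type*} {G : Type*} [Group G] {H : ι → Type*} [∀ i, Group (H i)]
  {α : Type*} [MulAction G α]

/-- Unlike `lift_injective_of_ping_pong`, this needs no cardinality assumption: each index `l`
gets its own configuration, whose base point `p` detects the reduced words ending in a letter of
`H l`. -/
def PingPongAt (f : ∀ i, H i →* G) (l : ι) (X : ι → Set α) (p : α) : Prop :=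
  (Pairwise fun i j => ∀ h : H i, h ≠ 1 → f i h • X j ⊆ X i) ∧
    (∀ h : H l, h ≠ 1 → f l h • p ∈ X l) ∧ ∀ i, p ∉ X i

theorem lift_neWord_prod_smul_mem {f : ∀ i, H i →* G} {X : ι → ι → Set α} {p : ι → α}
    (hX : ∀ l, PingPongAt f l (X l) (p l)) {i j : ι} (w : NeWord H i j) :
    lift f w.prod • p j ∈ X j i := by
  induction w with
  | singleton h hh => simpa using (hX _).2.1 h hh
  | append w₁ hne w₂ _ ih₂ =>
    rw [NeWord.append_prod, map_mul, mul_smul]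
    exact lift_word_ping_pong f _ (hX _).1 w₁ hne (Set.smul_mem_smul_set ih₂)

theorem lift_injective_of_pingPongAt {f : ∀ i, H i →* G}
    (h : ∀ l, ∃ (X : ι → Set α) (p : α), PingPongAt f l X p) : Injective (lift f) := by
  classical
  choose X p hX using h
  refine (injective_iff_map_eq_one _).2 fun x hx => ?_
  obtain ⟨w, rfl⟩ := Word.equiv.symm.surjective x
  by_contra hw
  have hne : w ≠ Word.empty := fun h => hw (by simp [h, Word.equiv])
  obtain ⟨i, j, w', rfl⟩ := NeWord.of_word w hne
  have hmem := lift_neWord_prod_smul_mem hX w'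
  rw [show lift f w'.prod = 1 from hx, one_smul] at hmem
  exact (hX j).2.2 i hmem

end CoprodI

end Monoid

namespace Monoid.CoprodI.Word

variable {ι : Type*} [DecidableEq ι] {G : ι → Type*} [∀ i, Group (G i)] [∀ i, DecidableEq (G i)]

theorem toList_head?_of_smul {i : ι} {m : G i} (hm : m ≠ 1) {w : Word G}
    (hw : w.fstIdx ≠ some i) : (of m • w).toList.head? = some ⟨i, m⟩ := by
  rw [← cons_eq_smul (h1 := hw) (h2 := hm)]
  rfl

theorem fstIdx_of_smul {i : ι} {m : G i} (hm : m ≠ 1) {w : Word G}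
    (hw : w.toList.head? ≠ some ⟨i, m⁻¹⟩) : (of m • w).fstIdx = some i := by
  rw [of_smul_def]
  by_cases h : m * (equivPair i w).head = 1
  · have hhead : (equivPair i w).head = m⁻¹ := eq_inv_of_mul_eq_one_right h
    refine absurd ?_ hw
    rw [← (equivPair i).symm_apply_apply w, equivPair_symm, rcons,
      dif_neg (by rw [hhead]; exact inv_ne_one.2 hm)]
    simp [hhead]
  · rw [rcons, dif_neg h, fstIdx_cons]

end Monoid.CoprodI.Word

open Monoid.CoprodI in
theorem FreeGroup.injective_lift_coprodI_of_mul_of {G : Bool → Type u} [∀ b, Group (G b)]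
    {ι : Type u} [Nontrivial ι] {c : ι → G true} {d : ι → G false}
    (hc : Injective c) (hd : Injective d) (hc1 : ∀ i, c i ≠ 1) (hd1 : ∀ i, d i ≠ 1) :
    Injective (FreeGroup.lift fun i => CoprodI.of (c i) * CoprodI.of (d i)) := by
  classical
  refine FreeGroup.injective_lift_of_ping_pong (fun i => CoprodI.of (c i) * CoprodI.of (d i))
    (fun i => {w : Word G | w.toList.head? = some ⟨true, c i⟩})
    (fun i => {w : Word G | w.toList.head? = some ⟨false, (d i)⁻¹⟩})
    (fun i => ⟨_, Word.toList_head?_of_smul (hc1 i) (w := .empty) (by simp [Word.fstIdx])⟩)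
    ?_ ?_ ?_ ?_ ?_
  · intro i j hij
    refine Set.disjoint_left.2 fun w hi hj => hij (hc ?_)
    simp_all
  · intro i j hij
    refine Set.disjoint_left.2 fun w hi hj => hij (hd ?_)
    simp_all
  · intro i j
    refine Set.disjoint_left.2 fun w hi hj => ?_
    simp_all
  · intro i
    refine Set.smul_set_subset_iff.2 fun w hw => ?_
    rw [mul_smul]
    refine Word.toList_head?_of_smul (hc1 i) ?_
    rw [Word.fstIdx_of_smul (hd1 i) hw]
    simp
  · intro i
    refine Set.smul_set_subset_iff.2 fun w hw => ?_
    rw [Pi.inv_apply, mul_inv_rev, ← MonoidHom.map_inv, ← MonoidHom.map_inv, mul_smul]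
    refine Word.toList_head?_of_smul (inv_ne_one.2 (hd1 i)) ?_
    rw [Word.fstIdx_of_smul (inv_ne_one.2 (hc1 i)) (by rwa [inv_inv])]
    simp

theorem Monoid.CoprodI.exists_subgroup_mulEquiv_freeGroup_fin_two {G : Type} [Group G] {a b : G}
    (ha : a ≠ 1) (hb : b ≠ 1) (hab : a ≠ b) :
    ∃ H : Subgroup (CoprodI fun _ : Bool => G), Nonempty (H ≃* FreeGroup (Fin 2)) := by
  have hc : Injective ![a, b] := by
    intro i j hij
    fin_cases i <;> fin_cases j <;> simp [hab, hab.symm] at hij ⊢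
  have hc1 : ∀ i, ![a, b] i ≠ 1 := by
    intro i
    fin_cases i <;> simpa
  exact ⟨_, ⟨(MonoidHom.ofInjective
    (FreeGroup.injective_lift_coprodI_of_mul_of (G := fun _ => G) hc hc hc1 hc1)).symm⟩⟩

section Transcendence

variable {R A : Type*} [CommRing R] [Ring A] [Algebra R A]

theorem mul_aeval_mul_swap (a b : A) (p : R[X]) : a * aeval (b * a) p = aeval (a * b) p * a := by
  induction p using Polynomial.induction_on' with
  | add p q hp hq => rw [map_add, map_add, mul_add, add_mul, hp, hq]
  | monomial n r =>
    have hpow : a * (b * a) ^ n = (a * b) ^ n * a :=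
      (SemiconjBy.pow_right (by rw [SemiconjBy, mul_assoc]) n : SemiconjBy a _ _)
    rw [aeval_monomial, aeval_monomial, Algebra.left_comm, hpow, mul_assoc]

-- Inside the `Transcendental` namespace a bare `aeval` means `Transcendental.aeval`.
theorem Transcendental.eq_zero_of_aeval_mul_eq_zero {a b : A} (h : Transcendental R (a * b))
    {p : R[X]} (hp : Polynomial.aeval (a * b) p * a = 0) : p = 0 := by
  refine isRegular_X.right ?_
  change p * X = 0 * X
  rw [zero_mul]
  refine transcendental_iff.1 h _ ?_
  rw [map_mul, aeval_X, ← mul_assoc, hp, zero_mul]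

theorem Transcendental.mul_swap {a b : A} (h : Transcendental R (a * b)) :
    Transcendental R (b * a) :=
  transcendental_iff.2 fun p hp =>
    h.eq_zero_of_aeval_mul_eq_zero (by rw [← mul_aeval_mul_swap, hp, mul_zero])

end Transcendence

theorem transcendental_of_sum_ne_zero {k A : Type*} [CommRing k] [Ring A] [Algebra k A]
    {k0 : Subring k} {w : A}
    (h : ∀ (N : ℕ) (c : ℕ → k), (∀ i, c i ∈ k0) → c N ≠ 0 →
      ∑ i ∈ Finset.range (N + 1), c i • w ^ i ≠ 0) :
    Transcendental k0 w := by
  refine transcendental_iff.2 fun p hp => ?_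
  by_contra hp0
  refine h p.natDegree (fun i => p.coeff i) (fun i => (p.coeff i).2) ?_ ?_
  · exact_mod_cast leadingCoeff_ne_zero.2 hp0
  · rwa [aeval_eq_sum_range] at hp

section ShearPingPong

variable {k A : Type*} [CommRing k] [Ring A] [Algebra k A] {k0 : Subring k}
  {R : Subalgebra k A} {W : A}

theorem aeval_mem_of_mem (hW : W ∈ R) (P : k0[X]) : aeval W P ∈ R := by
  rw [aeval_eq_sum_range]
  exact Subalgebra.sum_mem _ fun i _ => Subalgebra.smul_mem R (pow_mem hW i) (P.coeff i : k)

variable (k0 R W) (y z : A)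

def yDominant : Set A :=
  {a | ∃ r ∈ R, ∃ P Q : k0[X], Q ≠ 0 ∧ Q.degree < P.degree ∧
    a = r + aeval W P * y + aeval W Q * z}

def zDominant : Set A :=
  {a | ∃ r ∈ R, ∃ P Q : k0[X], Q ≠ 0 ∧ P.degree ≤ Q.degree ∧
    a = r + aeval W P * y + aeval W Q * z}

variable {k0 R W y z}

theorem notMem_yDominant_zDominant
    (hind : ∀ r ∈ R, ∀ s ∈ R, ∀ Q : k0[X], r + s * y + aeval W Q * z = 0 → Q = 0) (hW : W ∈ R) :
    y ∉ yDominant k0 R W y z ∧ y ∉ zDominant k0 R W y z := by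
  have key : ∀ r ∈ R, ∀ P Q : k0[X], Q ≠ 0 → y ≠ r + aeval W P * y + aeval W Q * z := by
    intro r hr P Q hQ hy
    refine neg_ne_zero.2 hQ (hind (-r) (neg_mem hr) (1 - aeval W P)
      (sub_mem (one_mem R) (aeval_mem_of_mem hW P)) (-Q) ?_)
    rw [map_neg, neg_mul, sub_mul, one_mul, ← sub_eq_zero.2 hy]
    abel
  exact ⟨fun ⟨r, hr, P, Q, hQ, _, h⟩ => key r hr P Q hQ h,
    fun ⟨r, hr, P, Q, hQ, _, h⟩ => key r hr P Q hQ h⟩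

variable [IsDomain k]

theorem mapsTo_yDominant_zDominant {φ : A ≃ₐ[k] A} (hR : ∀ r ∈ R, φ r = r) (hW : W ∈ R)
    {α : A} (hα : α ∈ R) {c : k0} (hc : c ≠ 0) (hy : φ y = y + c • α + c • z) (hz : φ z = z) :
    Set.MapsTo φ (yDominant k0 R W y z) (zDominant k0 R W y z) := by
  rintro _ ⟨r, hr, P, Q, hQ, hQP, rfl⟩
  have hdeg : (Q + C c * P).degree = P.degree := by
    rw [degree_add_eq_right_of_degree_lt (by rwa [degree_C_mul hc]), degree_C_mul hc]
  have hr' : r + c • (aeval W P * α) ∈ R :=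
    add_mem hr (R.smul_mem (mul_mem (aeval_mem_of_mem hW P) hα) (c : k))
  refine ⟨_, hr', P, Q + C c * P, fun h0 => ne_zero_of_degree_gt hQP ?_, hdeg.ge, ?_⟩
  · rwa [h0, degree_zero, eq_comm, degree_eq_bot] at hdeg
  · rw [map_add, map_add, map_mul, map_mul, hR r hr, hR _ (aeval_mem_of_mem hW P),
      hR _ (aeval_mem_of_mem hW Q), hy, hz, map_add, map_mul, aeval_C, ← Algebra.smul_def]
    simp only [mul_add, add_mul, mul_smul_comm, smul_mul_assoc]
    abel

theorem mapsTo_zDominant_yDominant {ψ : A ≃ₐ[k] A} (hR : ∀ r ∈ R, ψ r = r) (hW : W ∈ R)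
    {γ : A} (hγ : γ ∈ R) {c : k0} (hc : c ≠ 0) (hy : ψ y = y)
    (hz : ψ z = z + c • γ + c • (W * y)) :
    Set.MapsTo ψ (zDominant k0 R W y z) (yDominant k0 R W y z) := by
  rintro _ ⟨r, hr, P, Q, hQ, hPQ, rfl⟩
  have hlt : P.degree < (C c * (Q * X)).degree := by
    rw [degree_C_mul hc]
    exact hPQ.trans_lt (degree_lt_degree_mul_X hQ)
  have hdeg : (P + C c * (Q * X)).degree = (Q * X).degree := by
    rw [degree_add_eq_right_of_degree_lt hlt, degree_C_mul hc]
  have hr' : r + c • (aeval W Q * γ) ∈ R :=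
    add_mem hr (R.smul_mem (mul_mem (aeval_mem_of_mem hW Q) hγ) (c : k))
  refine ⟨_, hr', P + C c * (Q * X), Q, hQ, hdeg ▸ degree_lt_degree_mul_X hQ, ?_⟩
  rw [map_add, map_add, map_mul, map_mul, hR r hr, hR _ (aeval_mem_of_mem hW P),
    hR _ (aeval_mem_of_mem hW Q), hy, hz, map_add, map_mul, map_mul, aeval_C, aeval_X,
    ← Algebra.smul_def]
  simp only [mul_add, add_mul, mul_smul_comm, smul_mul_assoc, mul_assoc]
  abel

theorem apply_mem_zDominant {φ : A ≃ₐ[k] A} {α : A} (hα : α ∈ R) {c : k0} (hc : c ≠ 0)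
    (hy : φ y = y + c • α + c • z) : φ y ∈ zDominant k0 R W y z := by
  refine ⟨c • α, R.smul_mem hα (c : k), 1, C c, C_ne_zero.2 hc,
    by rw [degree_one, degree_C hc], ?_⟩
  rw [hy, map_one, one_mul, aeval_C, ← mul_one (algebraMap _ _ c), ← Algebra.smul_def,
    smul_mul_assoc, one_mul]
  abel

open Monoid.CoprodI in
theorem pingPongAt_of_shears (f : Bool → Multiplicative k0 →* (A ≃ₐ[k] A)) (l : Bool)
    (hR : ∀ b c, ∀ r ∈ R, f b c r = r) (hW : W ∈ R) {α γ : A} (hα : α ∈ R) (hγ : γ ∈ R)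
    (hind : ∀ r ∈ R, ∀ s ∈ R, ∀ Q : k0[X], r + s * y + aeval W Q * z = 0 → Q = 0)
    (hmove : ∀ c : k0, f l (.ofAdd c) y = y + c • α + c • z ∧ f l (.ofAdd c) z = z)
    (hshear : ∀ c : k0, f (!l) (.ofAdd c) y = y ∧
      f (!l) (.ofAdd c) z = z + c • γ + c • (W * y)) :
    PingPongAt f l (fun i => if i = l then zDominant k0 R W y z else yDominant k0 R W y z) y := by
  have hne : ∀ c : Multiplicative k0, c ≠ 1 → c.toAdd ≠ 0 := fun c hc h => hc (toAdd_eq_zero.1 h)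
  refine ⟨fun i j hij c hc => Set.smul_set_subset_iff.2 fun a ha => ?_, fun c hc => ?_, fun i => ?_⟩
  · dsimp only at ha ⊢
    by_cases hi : i = l
    · subst hi
      obtain rfl : j = !i := Bool.eq_not_iff.2 hij.symm
      rw [if_neg (Bool.not_ne_self i)] at ha
      rw [if_pos rfl]
      exact mapsTo_yDominant_zDominant (hR i c) hW hα (hne c hc) (hmove c.toAdd).1
        (hmove c.toAdd).2 ha
    · obtain rfl : i = !l := Bool.eq_not_iff.2 hi
      obtain rfl : j = l := by simpa using Bool.eq_not_iff.2 hij.symm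
      rw [if_pos rfl] at ha
      rw [if_neg hi]
      exact mapsTo_zDominant_yDominant (hR _ c) hW hγ (hne c hc) (hshear c.toAdd).1
        (hshear c.toAdd).2 ha
  · dsimp only
    rw [if_pos rfl]
    exact apply_mem_zDominant hα (hne c hc) (hmove c.toAdd).1
  · dsimp only
    split_ifs
    exacts [(notMem_yDominant_zDominant hind hW).2, (notMem_yDominant_zDominant hind hW).1]

open Monoid.CoprodI in
theorem exists_pingPongAt_of_shears (f : Bool → Multiplicative k0 →* (A ≃ₐ[k] A)) (l : Bool)
    (hR : ∀ b c, ∀ r ∈ R, f b c r = r) {x₀ x₁ a₀ a₁ b₀ b₁ : A}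
    (ha₀ : a₀ ∈ R) (ha₁ : a₁ ∈ R) (hb₀ : b₀ ∈ R) (hb₁ : b₁ ∈ R)
    (hfree : ∀ r₀ ∈ R, ∀ r₁ ∈ R, ∀ r₂ ∈ R, r₀ + r₁ * x₀ + r₂ * x₁ = 0 → r₁ = 0 ∧ r₂ = 0)
    (htr : Transcendental k0 (a₁ * b₁))
    (hg : ∀ n : k0, f l (.ofAdd n) x₀ = x₀ + n • a₀ + n • (a₁ * x₁) ∧ f l (.ofAdd n) x₁ = x₁)
    (hh : ∀ m : k0, f (!l) (.ofAdd m) x₁ = x₁ + m • b₀ + m • (b₁ * x₀) ∧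
      f (!l) (.ofAdd m) x₀ = x₀) :
    ∃ (X : Bool → Set A) (p : A), PingPongAt f l X p := by
  refine ⟨_, _, pingPongAt_of_shears f l hR (mul_mem ha₁ hb₁) ha₀ (mul_mem ha₁ hb₀) ?_
    (fun n => ⟨(hg n).1, ?_⟩) (fun m => ⟨(hh m).2, ?_⟩)⟩
  · refine fun r hr s hs Q hQ => htr.eq_zero_of_aeval_mul_eq_zero ?_
    refine (hfree r hr s hs _ (mul_mem (aeval_mem_of_mem (mul_mem ha₁ hb₁) Q) ha₁) ?_).2
    rwa [mul_assoc]
  · rw [map_mul, hR _ _ a₁ ha₁, (hg n).2]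
  · rw [map_mul, hR _ _ a₁ ha₁, (hh m).1, mul_add, mul_add, mul_smul_comm, mul_smul_comm,
      ← mul_assoc]

theorem lift_injective_of_shears (F₁ F₂ : Multiplicative k0 →* (A ≃ₐ[k] A))
    (hF₁R : ∀ c, ∀ r ∈ R, F₁ c r = r) (hF₂R : ∀ c, ∀ r ∈ R, F₂ c r = r) {x₀ x₁ a₀ a₁ b₀ b₁ : A}
    (ha₀ : a₀ ∈ R) (ha₁ : a₁ ∈ R) (hb₀ : b₀ ∈ R) (hb₁ : b₁ ∈ R)
    (hfree : ∀ r₀ ∈ R, ∀ r₁ ∈ R, ∀ r₂ ∈ R, r₀ + r₁ * x₀ + r₂ * x₁ = 0 → r₁ = 0 ∧ r₂ = 0)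
    (htr : Transcendental k0 (a₁ * b₁))
    (hF₁ : ∀ m : k0, F₁ (.ofAdd m) x₁ = x₁ + m • b₀ + m • (b₁ * x₀) ∧ F₁ (.ofAdd m) x₀ = x₀)
    (hF₂ : ∀ n : k0, F₂ (.ofAdd n) x₀ = x₀ + n • a₀ + n • (a₁ * x₁) ∧ F₂ (.ofAdd n) x₁ = x₁) :
    Injective (CoprodI.lift fun b => cond b F₁ F₂) := by
  have hR : ∀ b c, ∀ r ∈ R, cond b F₁ F₂ c r = r := by
    rintro (_ | _)
    exacts [hF₂R, hF₁R]
  refine CoprodI.lift_injective_of_pingPongAt (α := A) fun l => ?_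
  cases l
  · exact exists_pingPongAt_of_shears _ false hR ha₀ ha₁ hb₀ hb₁ hfree htr hF₂ hF₁
  · refine exists_pingPongAt_of_shears _ true hR hb₀ hb₁ ha₀ ha₁ (fun r₀ h₀ r₁ h₁ r₂ h₂ h => ?_)
      htr.mul_swap hF₁ hF₂
    exact (hfree r₀ h₀ r₂ h₂ r₁ h₁ (by rwa [add_right_comm])).symm

end ShearPingPong

theorem exists_ne_zero_ne_one_of_natCard_ne_two {M₀ : Type*} [MulZeroOneClass M₀]
    [Nontrivial M₀] (h : Nat.card M₀ ≠ 2) : ∃ u : M₀, u ≠ 0 ∧ u ≠ 1 := by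
  by_contra! H
  exact h ((Nat.card_eq_two_iff' 0).2 ⟨1, one_ne_zero, H⟩)

theorem stmt11_general (k A : Type) [CommRing k] [IsDomain k] [Ring A] [Algebra k A]
    (t : ℕ) (x : ℕ → A)
    (a0 a1 b0 b1 : A)
    (hmem : ∀ c ∈ ({a0, a1, b0, b1} : Set A),
      c ∈ Algebra.adjoin k (x '' {i | 2 ≤ i ∧ i < t}))
    (g h : k → (A ≃ₐ[k] A))
    (hg : ∀ n : k, (g n) (x 0) = x 0 + n • a0 + n • (a1 * x 1) ∧
      ∀ i, i ≠ 0 → (g n) (x i) = x i)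
    (hh : ∀ m : k, (h m) (x 1) = x 1 + m • b0 + m • (b1 * x 0) ∧
      ∀ i, i ≠ 1 → (h m) (x i) = x i)
    -- `R + R x_1 + R x_2` is a free left `R`-module with basis `{1, x_1, x_2}`:
    (hfree : ∀ r0 r1 r2 : A,
      r0 ∈ Algebra.adjoin k (x '' {i | 2 ≤ i ∧ i < t}) →
      r1 ∈ Algebra.adjoin k (x '' {i | 2 ≤ i ∧ i < t}) →
      r2 ∈ Algebra.adjoin k (x '' {i | 2 ≤ i ∧ i < t}) →
      r0 + r1 * x 0 + r2 * x 1 = 0 → r0 = 0 ∧ r1 = 0 ∧ r2 = 0)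
    (k0 : Subring k)
    -- `a_1 b_1` is transcendental over `k_0`:
    (htr : ∀ (N : ℕ) (c : ℕ → k), (∀ i, c i ∈ k0) → c N ≠ 0 →
      ∑ i ∈ Finset.range (N + 1), c i • (a1 * b1) ^ i ≠ 0)
    (F1 F2 : Multiplicative k0 →* (A ≃ₐ[k] A))
    (hF1 : ∀ m : k0, F1 (Multiplicative.ofAdd m) = h (m : k))
    (hF2 : ∀ n : k0, F2 (Multiplicative.ofAdd n) = g (n : k)) :
    Function.Injective (Monoid.Coprod.lift F1 F2) ∧
      (Nat.card k0 ≠ 2 →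
        ∃ H : Subgroup (A ≃ₐ[k] A), Nonempty (H ≃* FreeGroup (Fin 2))) := by
  set R := Algebra.adjoin k (x '' {i | 2 ≤ i ∧ i < t})
  have hfix (φ : A ≃ₐ[k] A) (hφ : ∀ i, 2 ≤ i → φ (x i) = x i) : ∀ r ∈ R, φ r = r :=
    fun r hr => (AlgHom.eqOn_adjoin_iff (φ := φ.toAlgHom) (ψ := AlgHom.id k A)).2
      (by rintro _ ⟨i, hi, rfl⟩; exact hφ i hi.1) hr
  have hinj : Injective (CoprodI.lift fun b => cond b F1 F2) :=
    lift_injective_of_shears F1 F2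
      (fun c => hfix _ fun i hi => by rw [← ofAdd_toAdd c, hF1]; exact (hh _).2 i (by omega))
      (fun c => hfix _ fun i hi => by rw [← ofAdd_toAdd c, hF2]; exact (hg _).2 i (by omega))
      (hmem a0 (by simp)) (hmem a1 (by simp)) (hmem b0 (by simp)) (hmem b1 (by simp))
      (fun r₀ h₀ r₁ h₁ r₂ h₂ h => (hfree r₀ r₁ r₂ h₀ h₁ h₂ h).2)
      (transcendental_of_sum_ne_zero htr)
      (fun m => by rw [hF1]; exact ⟨(hh m).1, (hh m).2 0 (by omega)⟩)
      (fun n => by rw [hF2]; exact ⟨(hg n).1, (hg n).2 1 (by omega)⟩)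
  refine ⟨(Coprod.lift_injective_iff F1 F2).2 hinj, fun hcard => ?_⟩
  obtain ⟨u, hu0, hu1⟩ := exists_ne_zero_ne_one_of_natCard_ne_two hcard
  obtain ⟨H, ⟨e⟩⟩ := CoprodI.exists_subgroup_mulEquiv_freeGroup_fin_two
    (a := Multiplicative.ofAdd 1) (b := Multiplicative.ofAdd u) (by simp) (by simpa using hu0)
    (by simpa [eq_comm] using hu1)
  exact ⟨H.map _, ⟨(H.equivMapOfInjective _ hinj).symm.trans e⟩⟩

/-- Under the hypotheses of the previous statement (and with `g`, `h` additive in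
their parameters), the group homomorphism `(k_0,+) * (k_0,+) → Aut(A)` sending the
word `m_z * n_z * ⋯ * m_1 * n_1` to `h^{m_z} g^{n_z} ⋯ h^{m_1} g^{n_1}` is
injective; consequently, if `k_0 ≠ ℤ/2`, then `Aut(A)` contains a free subgroup
of rank two.  (Generators indexed `x_0, …, x_{t-1}`.) -/
theorem stmt11 (k A : Type) [CommRing k] [IsDomain k] [Ring A] [Algebra k A]
    (t : ℕ) (ht : 3 ≤ t) (x : ℕ → A)
    (hgen : Algebra.adjoin k (x '' {i | i < t}) = ⊤)
    (a0 a1 b0 b1 : A)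
    (hmem : ∀ c ∈ ({a0, a1, b0, b1} : Set A),
      c ∈ Algebra.adjoin k (x '' {i | 2 ≤ i ∧ i < t}))
    (g h : k → (A ≃ₐ[k] A))
    (hg : ∀ n : k, (g n) (x 0) = x 0 + n • a0 + n • (a1 * x 1) ∧
      ∀ i, i ≠ 0 → (g n) (x i) = x i)
    (hh : ∀ m : k, (h m) (x 1) = x 1 + m • b0 + m • (b1 * x 0) ∧
      ∀ i, i ≠ 1 → (h m) (x i) = x i)
    (hgadd : ∀ n n' : k, g (n + n') = g n * g n')
    (hhadd : ∀ m m' : k, h (m + m') = h m * h m')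
    -- `R + R x_1 + R x_2` is a free left `R`-module with basis `{1, x_1, x_2}`:
    (hfree : ∀ r0 r1 r2 : A,
      r0 ∈ Algebra.adjoin k (x '' {i | 2 ≤ i ∧ i < t}) →
      r1 ∈ Algebra.adjoin k (x '' {i | 2 ≤ i ∧ i < t}) →
      r2 ∈ Algebra.adjoin k (x '' {i | 2 ≤ i ∧ i < t}) →
      r0 + r1 * x 0 + r2 * x 1 = 0 → r0 = 0 ∧ r1 = 0 ∧ r2 = 0)
    (k0 : Subring k)
    -- `a_1 b_1` is transcendental over `k_0`:
    (htr : ∀ (N : ℕ) (c : ℕ → k), (∀ i, c i ∈ k0) → c N ≠ 0 →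
      ∑ i ∈ Finset.range (N + 1), c i • (a1 * b1) ^ i ≠ 0)
    (F1 F2 : Multiplicative k0 →* (A ≃ₐ[k] A))
    (hF1 : ∀ m : k0, F1 (Multiplicative.ofAdd m) = h (m : k))
    (hF2 : ∀ n : k0, F2 (Multiplicative.ofAdd n) = g (n : k)) :
    Function.Injective (Monoid.Coprod.lift F1 F2) ∧
      (Nat.card k0 ≠ 2 →
        ∃ H : Subgroup (A ≃ₐ[k] A), Nonempty (H ≃* FreeGroup (Fin 2))) :=
  stmt11_general k A t x a0 a1 b0 b1 hmem g h hg hh hfree k0 htr F1 F2 hF1 hF2
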